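/- Suppose |𝒴| = k > 2. Let s = (𝐱_s, 𝐱_t, 𝐲_s) be an (m,n)-sample with positive probability under π, let q be a probability mass function on 𝒳, and let g be any classifier consistent with the source sample (g(x_{s,i}) = y_{s,i} for all i). Then for every δ ∈ (0, 1], with probability at least 1 − δ over f drawn from the posterior ρ(·|s), one has R(g|q, f) ≥ (U(s, q) − 1)/log₂(k − 1) − √(V/δ), where V is the variance of R(g|q, f') when f' ∼ ρ(·|s). -/
import Mathlib


open Finset
open scoped Classical BigOperators

noncomputable section

/-- A UDA class over input space `X` and label space `Y`: a finitely supported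
probability distribution `π` over triples `(p, q, f)`, where `p` and `q` are
probability mass functions on `X` and `f : X → Y` is a classifier. -/
structure UDAClass (X Y : Type*) [Fintype X] where
  supp : Finset ((X → ℝ) × (X → ℝ) × (X → Y))
  w : ((X → ℝ) × (X → ℝ) × (X → Y)) → ℝ
  w_nonneg : ∀ t, 0 ≤ w t
  w_eq_zero : ∀ t ∉ supp, w t = 0
  w_sum : ∑ t ∈ supp, w t = 1
  p_nonneg : ∀ t ∈ supp, ∀ x, 0 ≤ t.1 x
  p_sum : ∀ t ∈ supp, ∑ x, t.1 x = 1
  q_nonneg : ∀ t ∈ supp, ∀ x, 0 ≤ t.2.1 x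
  q_sum : ∀ t ∈ supp, ∑ x, t.2.1 x = 1

variable {X Y : Type*} [Fintype X] [Fintype Y] [DecidableEq X] [DecidableEq Y]

/-- An `(m,n)`-sample `s = (x_s, x_t, y_s)`. -/
abbrev Sample (X Y : Type*) (m n : ℕ) := (Fin m → X) × (Fin n → X) × (Fin m → Y)

/-- The i.i.d. probability `p^m(xs) = ∏ i, p (xs i)` of a vector. -/
def iidProb {m : ℕ} (p : X → ℝ) (xs : Fin m → X) : ℝ := ∏ i, p (xs i)

/-- The normalizing constant `Z(s)`. -/
def Zval (π : UDAClass X Y) {m n : ℕ} (s : Sample X Y m n) : ℝ :=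
  ∑ t ∈ π.supp, π.w t * iidProb t.1 s.1 * iidProb t.2.1 s.2.1 *
    (if ∀ i, t.2.2 (s.1 i) = s.2.2 i then 1 else 0)

/-- The posterior over classifiers `ρ(f' | s)`. -/
def post (π : UDAClass X Y) {m n : ℕ} (s : Sample X Y m n) (f' : X → Y) : ℝ :=
  (∑ t ∈ π.supp, π.w t * iidProb t.1 s.1 * iidProb t.2.1 s.2.1 *
      (if t.2.2 = f' then 1 else 0) * (if ∀ i, f' (s.1 i) = s.2.2 i then 1 else 0))
    / Zval π s

/-- The aggregated soft classifier `ρ^A(y | x, s)`. -/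
def postA (π : UDAClass X Y) {m n : ℕ} (s : Sample X Y m n) (x : X) (y : Y) : ℝ :=
  ∑ f' : X → Y, post π s f' * (if f' x = y then 1 else 0)

/-- The target-domain risk `R(g | q, f)`. -/
def risk (g : X → Y) (q : X → ℝ) (f : X → Y) : ℝ :=
  ∑ x, q x * (if g x ≠ f x then 1 else 0)

/-- A learner assigns a probability distribution over classifiers to each sample. -/
def IsLearner {m n : ℕ} (A : Sample X Y m n → (X → Y) → ℝ) : Prop :=
  ∀ s, (∀ g, 0 ≤ A s g) ∧ ∑ g : X → Y, A s g = 1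

/-- The sample-wise risk `e(𝒜; s, q)`. -/
def swRisk (π : UDAClass X Y) {m n : ℕ} (A : Sample X Y m n → (X → Y) → ℝ)
    (s : Sample X Y m n) (q : X → ℝ) : ℝ :=
  ∑ x, q x * ∑ f' : X → Y, ∑ g : X → Y,
    post π s f' * A s g * (if f' x ≠ g x then 1 else 0)

/-- The optimal sample-wise risk `e*(s, q)`: the minimum of `e(𝒜; s, q)` over learners. -/
def eStar (π : UDAClass X Y) {m n : ℕ} (s : Sample X Y m n) (q : X → ℝ) : ℝ :=
  sInf {r : ℝ | ∃ A : Sample X Y m n → (X → Y) → ℝ, IsLearner A ∧ swRisk π A s q = r}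

/-- Base-2 Shannon entropy of a distribution on a finite set. -/
def entropy2 {Z : Type*} [Fintype Z] (μ : Z → ℝ) : ℝ :=
  -∑ z, μ z * Real.logb 2 (μ z)

/-- The Posterior Target Label Uncertainty `U(s, q)`. -/
def PTLU (π : UDAClass X Y) {m n : ℕ} (s : Sample X Y m n) (q : X → ℝ) : ℝ :=
  ∑ x, q x * entropy2 (fun y => postA π s x y)

/-- The Empirical Posterior Target Label Uncertainty `Ũ(s)`. -/
def EPTLU (π : UDAClass X Y) {m n : ℕ} (s : Sample X Y m n) : ℝ :=
  (1 / (n : ℝ)) * ∑ i : Fin n, entropy2 (fun y => postA π s (s.2.1 i) y)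

/-- The conditional distribution `π_{F|P,Q}(f' | p, q)`. -/
def condF (π : UDAClass X Y) (p q : X → ℝ) (f' : X → Y) : ℝ :=
  π.w (p, q, f') / ∑ f'' : X → Y, π.w (p, q, f'')

/-- The posterior over classifiers given the infinite-sample observation `(p, q, f_p)`. -/
def postInf (π : UDAClass X Y) (p q : X → ℝ) (f f' : X → Y) : ℝ :=
  (condF π p q f' * (if ∀ x, p x ≠ 0 → f' x = f x then 1 else 0)) /
    ∑ f'' : X → Y, condF π p q f'' * (if ∀ x, p x ≠ 0 → f'' x = f x then 1 else 0)

/-- Aggregation `ρ^A(y | x, p, q, f_p)` of the infinite-sample posterior. -/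
def postAInf (π : UDAClass X Y) (p q : X → ℝ) (f : X → Y) (x : X) (y : Y) : ℝ :=
  ∑ f' : X → Y, postInf π p q f f' * (if f' x = y then 1 else 0)

/-- The restriction `f_p` of a classifier `f` to the support of `p`. -/
def restrictSupp (p : X → ℝ) (f : X → Y) : {x : X // p x ≠ 0} → Y := fun x => f x.1

/-- An infinite-sample learner: maps each observation `(p, q, f_p)` to a
distribution over classifiers. -/
abbrev InfLearner (X Y : Type*) :=
  (p : X → ℝ) → (X → ℝ) → ({x : X // p x ≠ 0} → Y) → ((X → Y) → ℝ)

def IsInfLearner (A : InfLearner X Y) : Prop :=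
  ∀ p q fp, (∀ g, 0 ≤ A p q fp g) ∧ ∑ g : X → Y, A p q fp g = 1

/-- The sample-wise risk `e(𝒜_∞; p, q, f_p)` of an infinite-sample learner. -/
def swRiskInf (π : UDAClass X Y) (A : InfLearner X Y) (p q : X → ℝ) (f : X → Y) : ℝ :=
  ∑ x, q x * ∑ f' : X → Y, ∑ g : X → Y,
    postInf π p q f f' * A p q (restrictSupp p f) g * (if f' x ≠ g x then 1 else 0)

/-- The optimal sample-wise risk `e*(p, q, f_p)` on an infinite-sample observation. -/
def eStarInf (π : UDAClass X Y) (p q : X → ℝ) (f : X → Y) : ℝ :=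
  sInf {r : ℝ | ∃ A : InfLearner X Y, IsInfLearner A ∧ swRiskInf π A p q f = r}

/-- The PTLU `U(p, q, f_p)` on an infinite-sample observation. -/
def PTLUInf (π : UDAClass X Y) (p q : X → ℝ) (f : X → Y) : ℝ :=
  ∑ x, q x * entropy2 (fun y => postAInf π p q f x y)

/-- The expected target-domain risk `R(𝒜 | p, q, f)`. -/
def expRisk {m n : ℕ} (A : Sample X Y m n → (X → Y) → ℝ) (p q : X → ℝ) (f : X → Y) : ℝ :=
  ∑ xs : Fin m → X, ∑ xt : Fin n → X,
    iidProb p xs * iidProb q xt * ∑ g : X → Y, A (xs, xt, fun i => f (xs i)) g * risk g q f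

/-- The overall target-domain risk `R(𝒜)`. -/
def overallRisk (π : UDAClass X Y) {m n : ℕ} (A : Sample X Y m n → (X → Y) → ℝ) : ℝ :=
  ∑ t ∈ π.supp, π.w t * expRisk A t.1 t.2.1 t.2.2

/-- The overall target-domain risk `R(𝒜_∞)` of an infinite-sample learner. -/
def overallRiskInf (π : UDAClass X Y) (A : InfLearner X Y) : ℝ :=
  ∑ t ∈ π.supp, π.w t *
    ∑ g : X → Y, A t.1 t.2.1 (restrictSupp t.1 t.2.2) g * risk g t.2.1 t.2.2

section MyAux

variable {X Y : Type*} [Fintype X] [Fintype Y] [DecidableEq X] [DecidableEq Y]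

lemma my_iidProb_nonneg {m : ℕ} {p : X → ℝ} (hp : ∀ x, 0 ≤ p x) (xs : Fin m → X) :
    0 ≤ iidProb p xs :=
  Finset.prod_nonneg fun _ _ => hp _

lemma my_post_nonneg (π : UDAClass X Y) {m n : ℕ} (s : Sample X Y m n) (hZ : 0 < Zval π s)
    (f' : X → Y) : 0 ≤ post π s f' := by
  apply div_nonneg _ hZ.le
  refine Finset.sum_nonneg fun t ht => ?_
  have h1 := my_iidProb_nonneg (π.p_nonneg t ht) s.1
  have h2 := my_iidProb_nonneg (π.q_nonneg t ht) s.2.1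
  have h0 := π.w_nonneg t
  have h3 : (0:ℝ) ≤ if t.2.2 = f' then 1 else 0 := by split <;> norm_num
  have h4 : (0:ℝ) ≤ if ∀ i, f' (s.1 i) = s.2.2 i then 1 else 0 := by split <;> norm_num
  exact mul_nonneg (mul_nonneg (mul_nonneg (mul_nonneg h0 h1) h2) h3) h4

lemma my_sum_post (π : UDAClass X Y) {m n : ℕ} (s : Sample X Y m n) (hZ : 0 < Zval π s) :
    ∑ f' : X → Y, post π s f' = 1 := by
  unfold post
  rw [← Finset.sum_div, div_eq_one_iff_eq hZ.ne', Finset.sum_comm]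
  unfold Zval
  refine Finset.sum_congr rfl fun t ht => ?_
  rw [Finset.sum_eq_single t.2.2]
  · simp
  · intro f' _ hne
    simp [Ne.symm hne]
  · simp

lemma my_postA_nonneg (π : UDAClass X Y) {m n : ℕ} (s : Sample X Y m n) (hZ : 0 < Zval π s)
    (x : X) (y : Y) : 0 ≤ postA π s x y := by
  refine Finset.sum_nonneg fun f' _ => mul_nonneg (my_post_nonneg π s hZ f') ?_
  split <;> norm_num

lemma my_sum_postA (π : UDAClass X Y) {m n : ℕ} (s : Sample X Y m n) (hZ : 0 < Zval π s)
    (x : X) : ∑ y, postA π s x y = 1 := by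
  unfold postA
  rw [Finset.sum_comm]
  have h : ∀ f' : X → Y, ∑ y, post π s f' * (if f' x = y then 1 else 0) = post π s f' := by
    intro f'
    rw [← Finset.mul_sum]
    simp
  rw [Finset.sum_congr rfl fun f' _ => h f']
  exact my_sum_post π s hZ

lemma my_gibbs {Z : Type*} [Fintype Z] (μ Q : Z → ℝ) (hμ : ∀ z, 0 ≤ μ z)
    (hQ : ∀ z, 0 < Q z) (h : ∑ z, Q z ≤ ∑ z, μ z) :
    entropy2 μ ≤ -∑ z, μ z * Real.logb 2 (Q z) := by
  unfold entropy2
  rw [neg_le_neg_iff]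
  have hlog2 : (0:ℝ) < Real.log 2 := Real.log_pos one_lt_two
  have key : ∀ z, μ z * Real.logb 2 (Q z) - μ z * Real.logb 2 (μ z) ≤ (Q z - μ z) / Real.log 2 := by
    intro z
    rcases eq_or_lt_of_le (hμ z) with h0 | h0
    · rw [← h0, zero_mul, zero_mul, sub_zero, sub_zero]
      exact div_nonneg (hQ z).le hlog2.le
    · have hlog := Real.log_le_sub_one_of_pos (div_pos (hQ z) h0)
      rw [Real.log_div (hQ z).ne' h0.ne'] at hlog
      have h2 := mul_le_mul_of_nonneg_left hlog (hμ z)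
      have h3 : μ z * (Q z / μ z - 1) = Q z - μ z := by field_simp
      rw [mul_sub] at h2
      rw [Real.logb, Real.logb]
      rw [show μ z * (Real.log (Q z) / Real.log 2) - μ z * (Real.log (μ z) / Real.log 2)
        = (μ z * Real.log (Q z) - μ z * Real.log (μ z)) / Real.log 2 from by ring]
      exact (div_le_div_iff_of_pos_right hlog2).mpr (by linarith)
  calc ∑ z, μ z * Real.logb 2 (Q z)
      ≤ ∑ z, (μ z * Real.logb 2 (μ z) + (Q z - μ z) / Real.log 2) :=
        Finset.sum_le_sum fun z _ => by linarith [key z]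
    _ = ∑ z, μ z * Real.logb 2 (μ z) + (∑ z, Q z - ∑ z, μ z) / Real.log 2 := by
        rw [Finset.sum_add_distrib, ← Finset.sum_div, Finset.sum_sub_distrib]
    _ ≤ ∑ z, μ z * Real.logb 2 (μ z) := by
        have : (∑ z, Q z - ∑ z, μ z) / Real.log 2 ≤ 0 :=
          div_nonpos_of_nonpos_of_nonneg (by linarith) hlog2.le
        linarith

lemma my_fano {Y : Type*} [Fintype Y] [DecidableEq Y] (hk : 2 < Fintype.card Y)
    (μ : Y → ℝ) (hμ0 : ∀ y, 0 ≤ μ y) (hμ1 : ∑ y, μ y = 1) (a : Y) :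
    entropy2 μ ≤ 1 + (1 - μ a) * Real.logb 2 ((Fintype.card Y : ℝ) - 1) := by
  have hk3 : (3:ℝ) ≤ (Fintype.card Y : ℝ) := by exact_mod_cast hk
  set k : ℝ := (Fintype.card Y : ℝ) with hkdef
  have hk1 : (0:ℝ) < k - 1 := by linarith
  set L := Real.logb 2 (k - 1) with hLdef
  set Q : Y → ℝ := fun y => if y = a then 1/2 else (2*(k-1))⁻¹ with hQdef
  have hQpos : ∀ y, 0 < Q y := fun y => by
    simp only [hQdef]
    split
    · norm_num
    · positivity
  have hcast : ((Fintype.card Y - 1 : ℕ) : ℝ) = k - 1 := by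
    rw [Nat.cast_sub (by omega), hkdef]
    norm_num
  have hQsum : ∑ y, Q y = 1 := by
    rw [← Finset.add_sum_erase Finset.univ Q (Finset.mem_univ a)]
    have h1 : Q a = 1/2 := by simp [hQdef]
    have h2 : ∑ y ∈ Finset.univ.erase a, Q y = ((Fintype.card Y - 1 : ℕ) : ℝ) * (2*(k-1))⁻¹ := by
      have hc : ∀ y ∈ Finset.univ.erase a, Q y = (2*(k-1))⁻¹ := fun y hy => by
        simp only [hQdef]
        rw [if_neg (Finset.ne_of_mem_erase hy)]
      rw [Finset.sum_congr rfl hc, Finset.sum_const, nsmul_eq_mul,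
        Finset.card_erase_of_mem (Finset.mem_univ a), Finset.card_univ]
    rw [h1, h2, hcast]
    field_simp
    ring
  have hgibbs := my_gibbs μ Q hμ0 hQpos (by rw [hQsum, hμ1])
  refine hgibbs.trans ?_
  have hlogQ : ∀ y, Real.logb 2 (Q y) = if y = a then -1 else -(1 + L) := by
    intro y
    simp only [hQdef]
    split
    · rw [one_div, Real.logb_inv, Real.logb_self_eq_one (by norm_num)]
    · rw [Real.logb_inv, Real.logb_mul (by norm_num) hk1.ne',
        Real.logb_self_eq_one (by norm_num), hLdef]
  have hstep : -∑ y, μ y * Real.logb 2 (Q y)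
      = ∑ y, (μ y * (1 + L) - (if y = a then μ y * L else 0)) := by
    rw [← Finset.sum_neg_distrib]
    refine Finset.sum_congr rfl fun y _ => ?_
    rw [hlogQ y]
    split <;> ring
  rw [hstep, Finset.sum_sub_distrib, ← Finset.sum_mul, hμ1,
    Finset.sum_ite_eq' Finset.univ a (fun y => μ y * L)]
  simp only [Finset.mem_univ, if_true]
  exact le_of_eq (by ring)

end MyAux

/-- Theorem 3, case `k > 2`: for any classifier `g` consistent with
the source sample and any `δ ∈ (0,1]`, with probability at least `1 − δ` over
`f ∼ ρ(·|s)`, `R(g|q,f) ≥ (U(s,q) − 1)/log₂(k−1) − √(V/δ)`, where `V` is the posterior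
variance of `R(g|q,·)`. -/
theorem risk_high_prob_lower_bound_of_two_lt_card
    {X Y : Type*} [Fintype X] [Nonempty X] [Fintype Y] [DecidableEq X] [DecidableEq Y]
    (hk : 2 < Fintype.card Y)
    (π : UDAClass X Y) {m n : ℕ} (s : Sample X Y m n) (hZ : 0 < Zval π s)
    (q : X → ℝ) (hq0 : ∀ x, 0 ≤ q x) (hq1 : ∑ x, q x = 1)
    (g : X → Y) (hg : ∀ i, g (s.1 i) = s.2.2 i)
    (δ : ℝ) (hδ0 : 0 < δ) (hδ1 : δ ≤ 1) :
    1 - δ ≤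
      ∑ f' ∈ Finset.univ.filter (fun f' : X → Y =>
          (PTLU π s q - 1) / Real.logb 2 ((Fintype.card Y : ℝ) - 1) -
            Real.sqrt ((∑ f'' : X → Y, post π s f'' *
              (risk g q f'' - ∑ f₀ : X → Y, post π s f₀ * risk g q f₀) ^ 2) / δ)
            ≤ risk g q f'),
        post π s f' := by
  classical
  set Rbar : ℝ := ∑ f₀ : X → Y, post π s f₀ * risk g q f₀ with hRbar
  set V : ℝ := ∑ f'' : X → Y, post π s f'' * (risk g q f'' - Rbar) ^ 2 with hV
  have hV0 : 0 ≤ V := by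
    rw [hV]
    exact Finset.sum_nonneg fun f'' _ => mul_nonneg (my_post_nonneg π s hZ f'') (sq_nonneg _)
  set t : ℝ := Real.sqrt (V / δ) with htdef
  have ht0 : 0 ≤ t := Real.sqrt_nonneg _
  have ht2 : t ^ 2 = V / δ := Real.sq_sqrt (div_nonneg hV0 hδ0.le)
  have hL : (0:ℝ) < Real.logb 2 ((Fintype.card Y : ℝ) - 1) := by
    apply Real.logb_pos one_lt_two
    have : (3:ℝ) ≤ (Fintype.card Y : ℝ) := by exact_mod_cast hk
    linarith
  -- relate Rbar to the posterior error probabilities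
  have hrisk : ∀ f' : X → Y, risk g q f' = 1 - ∑ x, q x * (if f' x = g x then 1 else 0) := by
    intro f'
    unfold risk
    have hx : ∀ x ∈ Finset.univ, q x * (if g x ≠ f' x then (1:ℝ) else 0)
        = q x - q x * (if f' x = g x then 1 else 0) := by
      intro x _
      by_cases h : f' x = g x
      · rw [if_pos h, if_neg (fun hc : g x ≠ f' x => hc h.symm), mul_zero, mul_one, sub_self]
      · rw [if_neg h, if_pos (fun hc : g x = f' x => h hc.symm), mul_zero, mul_one, sub_zero]
    rw [Finset.sum_congr rfl hx, Finset.sum_sub_distrib, hq1]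
  have hEbar : ∑ x, q x * (1 - postA π s x (g x)) = Rbar := by
    have h1 : ∑ x, q x * (1 - postA π s x (g x))
        = 1 - ∑ x, ∑ f' : X → Y, q x * (post π s f' * (if f' x = g x then 1 else 0)) := by
      simp only [mul_sub, mul_one, Finset.sum_sub_distrib, hq1, postA, Finset.mul_sum]
    have h2 : Rbar
        = 1 - ∑ f' : X → Y, ∑ x, q x * (post π s f' * (if f' x = g x then 1 else 0)) := by
      rw [hRbar]
      simp only [hrisk, mul_sub, mul_one, Finset.sum_sub_distrib, my_sum_post π s hZ,
        Finset.mul_sum]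
      congr 1
      exact Finset.sum_congr rfl fun f' _ => Finset.sum_congr rfl fun x _ => by ring
    rw [h1, h2, Finset.sum_comm]
  -- Fano step
  have hfano : PTLU π s q ≤ 1 + Rbar * Real.logb 2 ((Fintype.card Y : ℝ) - 1) := by
    have hpt : PTLU π s q
        ≤ ∑ x, q x * (1 + (1 - postA π s x (g x)) * Real.logb 2 ((Fintype.card Y : ℝ) - 1)) := by
      unfold PTLU
      refine Finset.sum_le_sum fun x _ => mul_le_mul_of_nonneg_left ?_ (hq0 x)
      exact my_fano hk _ (my_postA_nonneg π s hZ x) (my_sum_postA π s hZ x) (g x)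
    refine hpt.trans_eq ?_
    simp only [mul_add, mul_one, Finset.sum_add_distrib, hq1]
    congr 1
    rw [← hEbar, Finset.sum_mul]
    exact Finset.sum_congr rfl fun x _ => by ring
  have hthr : (PTLU π s q - 1) / Real.logb 2 ((Fintype.card Y : ℝ) - 1) ≤ Rbar :=
    (div_le_iff₀ hL).mpr (by linarith)
  -- Chebyshev step
  set P : (X → Y) → Prop := fun f' =>
    (PTLU π s q - 1) / Real.logb 2 ((Fintype.card Y : ℝ) - 1) - t ≤ risk g q f' with hP
  have hsplit := Finset.sum_filter_add_sum_filter_not Finset.univ P (post π s)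
  rw [my_sum_post π s hZ] at hsplit
  have hbadsq : ∀ f' ∈ Finset.univ.filter (fun f' => ¬ P f'),
      risk g q f' < Rbar - t ∧ t ^ 2 ≤ (risk g q f' - Rbar) ^ 2 := by
    intro f' hf'
    have h1 : ¬ P f' := (Finset.mem_filter.mp hf').2
    rw [hP] at h1
    have h2 := lt_of_not_ge h1
    have h3 : risk g q f' < Rbar - t := by linarith
    refine ⟨h3, ?_⟩
    have h4 : t ≤ Rbar - risk g q f' := by linarith
    calc t ^ 2 ≤ (Rbar - risk g q f') ^ 2 := pow_le_pow_left₀ ht0 h4 2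
      _ = (risk g q f' - Rbar) ^ 2 := by ring
  have hcheb : V / δ * ∑ f' ∈ Finset.univ.filter (fun f' => ¬ P f'), post π s f' ≤ V := by
    rw [Finset.mul_sum]
    calc ∑ f' ∈ Finset.univ.filter (fun f' => ¬ P f'), V / δ * post π s f'
        ≤ ∑ f' ∈ Finset.univ.filter (fun f' => ¬ P f'),
            post π s f' * (risk g q f' - Rbar) ^ 2 := by
          refine Finset.sum_le_sum fun f' hf' => ?_
          rw [← ht2]
          have hs := (hbadsq f' hf').2
          have hp := my_post_nonneg π s hZ f'
          nlinarith [mul_le_mul_of_nonneg_right hs hp]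
      _ ≤ V := by
          rw [hV]
          exact Finset.sum_le_sum_of_subset_of_nonneg (Finset.filter_subset _ _)
            fun f'' _ _ => mul_nonneg (my_post_nonneg π s hZ f'') (sq_nonneg _)
  have hbadle : ∑ f' ∈ Finset.univ.filter (fun f' => ¬ P f'), post π s f' ≤ δ := by
    rcases eq_or_lt_of_le hV0 with hVz | hVpos
    · have hall : ∀ f' ∈ Finset.univ.filter (fun f' => ¬ P f'), post π s f' = 0 := by
        intro f' hf'
        have hsum0 : ∑ f'' : X → Y, post π s f'' * (risk g q f'' - Rbar) ^ 2 = 0 := by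
          rw [← hV, ← hVz]
        have hterm : post π s f' * (risk g q f' - Rbar) ^ 2 = 0 :=
          (Finset.sum_eq_zero_iff_of_nonneg
            (fun f'' _ => mul_nonneg (my_post_nonneg π s hZ f'') (sq_nonneg _))).mp
            hsum0 f' (Finset.mem_univ f')
        have hlt : risk g q f' - Rbar < 0 := by linarith [(hbadsq f' hf').1, ht0]
        have hne : (risk g q f' - Rbar) ^ 2 ≠ 0 := pow_ne_zero 2 (ne_of_lt hlt)
        exact (mul_eq_zero.mp hterm).resolve_right hne
      rw [Finset.sum_eq_zero hall]
      exact hδ0.le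
    · have hVδ : 0 < V / δ := div_pos hVpos hδ0
      have h5 : V / δ * ∑ f' ∈ Finset.univ.filter (fun f' => ¬ P f'), post π s f'
          ≤ V / δ * δ := by
        rw [div_mul_cancel₀ V hδ0.ne']
        exact hcheb
      exact le_of_mul_le_mul_left h5 hVδ
  linarith


end
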